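/- Let λ ≥ 2 and h ≥ 1 be coprime integers, where λ is not a power of a single prime. Let a : ℕ → ℂ be λ-automatic and multiplicative, and suppose there is a Dirichlet character χ of modulus hλ such that a(n) = χ(n) for all n ≥ 1 coprime to hλ. Then a is periodic on the positive integers: there exists d ≥ 1 with a(n+d) = a(n) for all n ≥ 1. -/

import Mathlib

/-- A sequence `f : ℕ → ℂ` is `lam`-automatic if its `lam`-kernel is finite. -/
def IsAutomatic (lam : ℕ) (f : ℕ → ℂ) : Prop :=
  {g : ℕ → ℂ | ∃ k r : ℕ, r < lam ^ k ∧ g = fun n => f (lam ^ k * n + r)}.Finite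

/-- A sequence is multiplicative if `f 1 = 1` and `f (m*n) = f m * f n` for coprime `m n ≥ 1`. -/
def IsMultiplicativeSeq (f : ℕ → ℂ) : Prop :=
  f 1 = 1 ∧ ∀ m n : ℕ, 1 ≤ m → 1 ≤ n → Nat.Coprime m n → f (m * n) = f m * f n

/-- Eventually periodic sequence. -/
def EventuallyPeriodicSeq (f : ℕ → ℂ) : Prop :=
  ∃ d : ℕ, 1 ≤ d ∧ ∃ n₀ : ℕ, ∀ n ≥ n₀, f (n + d) = f n

/-- A Dirichlet character of modulus `k`: `k`-periodic, completely multiplicative,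
and vanishing exactly at arguments not coprime to `k`. -/
def IsDirichletCharacterSeq (k : ℕ) (χ : ℕ → ℂ) : Prop :=
  (∀ n : ℕ, χ (n + k) = χ n) ∧ (∀ m n : ℕ, χ (m * n) = χ m * χ n) ∧
    (∀ n : ℕ, χ n = 0 ↔ 1 < Nat.gcd n k)

/-! Write `K = h * lam` and split `χ = χ_p * ψ_p` into its components modulo `p ^ v_p(K)` and
modulo the prime-to-`p` part `R` of `K`.

Automaticity gives a local condition at each `p ∣ K`. Since `lam = p ^ α * Q` with `Q ≥ 2` prime to
`p`, two kernel sequences `n ↦ a (lam ^ k * n + p ^ (α * k))` with `k < k + t` coincide; their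
arguments are `p ^ (α * k) * (Q ^ k * n + 1)` and `p ^ (α * (k + t)) * (Q ^ (k + t) * n + 1)`.
Choosing `n` so that `Q ^ k * n + 1 = p ^ j * m` with `m ≡ x [MOD p ^ v_p(K)]`, the second
argument has `p`-valuation `δ = v_p(Q ^ t - 1)` and a cofactor in a fixed class. Hence
`a (p ^ (α * k + j)) * χ_p x / ψ_p p ^ j` is independent of `j` and of `x`: either `a (p ^ e)`
vanishes eventually, or `a (p ^ e) = C * ψ_p p ^ e` eventually and `χ_p` is trivial.

Periodicity then follows by induction on `K`. Writing `n = p ^ v * m` with `p ∤ m`,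
`a n = (a (p ^ v) * χ_p m / ψ_p p ^ v) * (ψ_p p ^ v * a m / χ_p m)`. The first factor is periodic
by the local condition at `p`; the second is multiplicative, agrees with the character `ψ_p`
modulo `R` on integers prime to `R`, and satisfies the local conditions at the primes of `R`. -/

namespace IsDirichletCharacterSeq

variable {K : ℕ} {χ : ℕ → ℂ}

theorem periodic (hχ : IsDirichletCharacterSeq K χ) : Function.Periodic χ K := hχ.1

theorem map_mul (hχ : IsDirichletCharacterSeq K χ) (m n : ℕ) : χ (m * n) = χ m * χ n :=
  hχ.2.1 m n

theorem eq_of_modEq (hχ : IsDirichletCharacterSeq K χ) {x y : ℕ} (h : x ≡ y [MOD K]) :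
    χ x = χ y := by
  rw [← hχ.periodic.map_mod_nat x, h, hχ.periodic.map_mod_nat]

theorem ne_zero (hχ : IsDirichletCharacterSeq K χ) {n : ℕ} (hn : n.Coprime K) : χ n ≠ 0 := by
  rw [Ne, hχ.2.2, hn.gcd_eq_one]
  exact lt_irrefl 1

theorem map_one (hχ : IsDirichletCharacterSeq K χ) : χ 1 = 1 := by
  have h := hχ.map_mul 1 1
  rw [one_mul, eq_comm] at h
  exact (mul_eq_left₀ (hχ.ne_zero (Nat.coprime_one_left K))).mp h

theorem eq_of_modEq_of_modEq {A B : ℕ} (hχ : IsDirichletCharacterSeq K χ) (hAB : A.Coprime B)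
    (hK : A * B = K) {x y : ℕ} (hA : x ≡ y [MOD A]) (hB : x ≡ y [MOD B]) : χ x = χ y :=
  hχ.eq_of_modEq (hK ▸ (Nat.modEq_and_modEq_iff_modEq_mul hAB).mp ⟨hA, hB⟩)

theorem map_pow (hχ : IsDirichletCharacterSeq K χ) (z e : ℕ) : χ (z ^ e) = χ z ^ e := by
  induction e with
  | zero => simpa using hχ.map_one
  | succ e ih => rw [pow_succ, pow_succ, hχ.map_mul, ih]

end IsDirichletCharacterSeq

section Component

variable {A B K : ℕ} {χ : ℕ → ℂ}

/-- The component modulo `A` of a character modulo `A * B`, through `ℤ/AB ≅ ℤ/A × ℤ/B`. -/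
def charComponent (hAB : A.Coprime B) (χ : ℕ → ℂ) (z : ℕ) : ℂ :=
  χ (Nat.chineseRemainder hAB z 1)

theorem charComponent_eq (hAB : A.Coprime B) (hK : A * B = K) (hχ : IsDirichletCharacterSeq K χ)
    {z w : ℕ} (hA : w ≡ z [MOD A]) (hB : w ≡ 1 [MOD B]) : charComponent hAB χ z = χ w :=
  hχ.eq_of_modEq_of_modEq hAB hK ((Nat.chineseRemainder hAB z 1).2.1.trans hA.symm)
    ((Nat.chineseRemainder hAB z 1).2.2.trans hB.symm)

theorem charComponent_congr (hAB : A.Coprime B) (hK : A * B = K)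
    (hχ : IsDirichletCharacterSeq K χ) {z z' : ℕ} (h : z ≡ z' [MOD A]) :
    charComponent hAB χ z = charComponent hAB χ z' :=
  charComponent_eq hAB hK hχ ((Nat.chineseRemainder hAB z' 1).2.1.trans h.symm)
    (Nat.chineseRemainder hAB z' 1).2.2

theorem charComponent_mul_charComponent (hAB : A.Coprime B) (hK : A * B = K)
    (hχ : IsDirichletCharacterSeq K χ) (z : ℕ) :
    charComponent hAB χ z * charComponent hAB.symm χ z = χ z := by
  have u := (Nat.chineseRemainder hAB z 1).2
  have v := (Nat.chineseRemainder hAB.symm z 1).2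
  exact (hχ.map_mul _ _).symm.trans
    (hχ.eq_of_modEq_of_modEq hAB hK (by simpa using u.1.mul v.2) (by simpa using u.2.mul v.1))

theorem IsDirichletCharacterSeq.charComponent (hχ : IsDirichletCharacterSeq K χ)
    (hAB : A.Coprime B) (hK : A * B = K) : IsDirichletCharacterSeq A (charComponent hAB χ) := by
  refine ⟨fun z => charComponent_congr hAB hK hχ Nat.add_modEq_right, fun m n => ?_, fun z => ?_⟩
  · have u := (Nat.chineseRemainder hAB m 1).2
    have v := (Nat.chineseRemainder hAB n 1).2
    exact (charComponent_eq hAB hK hχ (u.1.mul v.1) (by simpa using u.2.mul v.2)).trans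
      (hχ.map_mul _ _)
  · have u := (Nat.chineseRemainder hAB z 1).2
    have hgcd : Nat.gcd (Nat.chineseRemainder hAB z 1) K = Nat.gcd z A := by
      rw [← hK, Nat.Coprime.gcd_mul _ hAB, u.1.gcd_eq, u.2.gcd_eq, Nat.gcd_one_left, mul_one]
    rw [_root_.charComponent, hχ.2.2, hgcd]

end Component

section NestedComponent

variable {A B C D X Y K : ℕ} {χ : ℕ → ℂ}

theorem charComponent_charComponent (hAB : A.Coprime B) (hCD : C.Coprime D)
    (hXY : X.Coprime Y) (hK : A * B = K) (hB : C * D = B) (hX : X = C) (hY : Y = A * D)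
    (hχ : IsDirichletCharacterSeq K χ) :
    charComponent hCD (charComponent hAB.symm χ) = charComponent hXY χ := by
  funext z
  have u := (Nat.chineseRemainder hCD z 1).2
  have v := (Nat.chineseRemainder hAB.symm (Nat.chineseRemainder hCD z 1) 1).2
  have hAD : A.Coprime D := hAB.coprime_dvd_right ⟨C, by rw [← hB, mul_comm]⟩
  refine (charComponent_eq hXY (by rw [hX, hY, ← hK, ← hB]; ring) hχ ?_ ?_).symm
  · exact hX ▸ (v.1.of_dvd ⟨D, hB.symm⟩).trans u.1
  · refine hY ▸ (Nat.modEq_and_modEq_iff_modEq_mul hAD).mp ⟨v.2, ?_⟩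
    exact (v.1.of_dvd ⟨C, by rw [← hB, mul_comm]⟩).trans u.2

theorem charComponent_mul_charComponent_charComponent (hAB : A.Coprime B) (hCD : C.Coprime D)
    (hXY : X.Coprime Y) (hK : A * B = K) (hB : C * D = B) (hX : X = C) (hY : Y = A * D)
    (hχ : IsDirichletCharacterSeq K χ) (z : ℕ) :
    charComponent hAB χ z * charComponent hCD.symm (charComponent hAB.symm χ) z =
      charComponent hXY.symm χ z := by
  set w := (Nat.chineseRemainder hXY.symm z 1 : ℕ)
  obtain ⟨hwAD, hwC⟩ : w ≡ z [MOD A * D] ∧ w ≡ 1 [MOD C] := by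
    rw [← hY, ← hX]; exact (Nat.chineseRemainder hXY.symm z 1).2
  have hψ := hχ.charComponent hAB.symm (by rw [mul_comm, hK])
  calc _ = charComponent hAB χ w * charComponent hAB.symm χ w := by
        rw [charComponent_congr hAB hK hχ (hwAD.of_dvd (Dvd.intro D rfl)).symm,
          charComponent_eq hCD.symm (by rw [mul_comm, hB]) hψ
            (hwAD.of_dvd (Dvd.intro_left A rfl)) hwC]
    _ = χ w := charComponent_mul_charComponent hAB hK hχ w

end NestedComponent

theorem Nat.coprime_ordProj_ordCompl (n p : ℕ) : (ordProj[p] n).Coprime (ordCompl[p] n) := by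
  by_cases hp : p.Prime
  · rcases eq_or_ne n 0 with rfl | hn
    · simp
    · exact (Nat.coprime_ordCompl hp hn).pow_left _
  · simp [Nat.factorization_eq_zero_of_not_prime n hp]

theorem Nat.factorization_pow_mul_of_not_dvd {p m : ℕ} (hp : p.Prime) (hm : ¬p ∣ m) (k : ℕ) :
    (p ^ k * m).factorization p = k := by
  have hm0 : m ≠ 0 := fun h => hm (h ▸ dvd_zero p)
  rw [Nat.factorization_mul (pow_ne_zero k hp.ne_zero) hm0, Finsupp.add_apply,
    hp.factorization_pow, Finsupp.single_eq_same, Nat.factorization_eq_zero_of_not_dvd hm,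
    add_zero]

theorem Nat.factorization_ordCompl_of_ne {p q : ℕ} (hqp : q ≠ p) (n : ℕ) :
    (ordCompl[p] n).factorization q = n.factorization q := by
  rw [Nat.factorization_ordCompl, Finsupp.erase_ne hqp]

theorem Nat.ordCompl_eq_ordProj_mul_ordCompl_ordCompl {p q : ℕ} (hp : p.Prime) (hq : q.Prime)
    (hqp : q ≠ p) (n : ℕ) : ordCompl[q] n = ordProj[p] n * ordCompl[q] (ordCompl[p] n) := by
  have hq_pow : ¬q ∣ ordProj[p] n := fun h =>
    hqp ((Nat.prime_dvd_prime_iff_eq hq hp).mp (hq.dvd_of_dvd_pow h))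
  conv_lhs => rw [← Nat.ordProj_mul_ordCompl_eq_self n p]
  rw [Nat.ordCompl_mul, (Nat.ordCompl_eq_self_iff_zero_or_not_dvd _ hq).mpr (Or.inr hq_pow)]

theorem Nat.factorization_add_pow_of_lt {p n N : ℕ} (hp : p.Prime) (hn : n ≠ 0)
    (h : n.factorization p < N) :
    (n + p ^ N).factorization p = n.factorization p ∧
      ordCompl[p] (n + p ^ N) = ordCompl[p] n + p ^ (N - n.factorization p) := by
  have hsplit : n + p ^ N = ordProj[p] n * (ordCompl[p] n + p ^ (N - n.factorization p)) := by
    rw [mul_add, ← pow_add, Nat.ordProj_mul_ordCompl_eq_self, Nat.add_sub_cancel' h.le]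
  have hfree : ¬p ∣ ordCompl[p] n + p ^ (N - n.factorization p) := fun hd =>
    Nat.not_dvd_ordCompl hp hn ((Nat.dvd_add_left (dvd_pow_self p (by omega))).mp hd)
  rw [hsplit]
  exact ⟨Nat.factorization_pow_mul_of_not_dvd hp hfree _,
    Nat.ordCompl_pow_mul_of_not_dvd _ hp hfree⟩

theorem Nat.le_factorization_add {p n d E : ℕ} (hp : p.Prime) (hn : n ≠ 0) (hd : d ≠ 0)
    (hEn : E ≤ n.factorization p) (hEd : E ≤ d.factorization p) :
    E ≤ (n + d).factorization p := by
  rw [← hp.pow_dvd_iff_le_factorization hn] at hEn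
  rw [← hp.pow_dvd_iff_le_factorization hd] at hEd
  exact (hp.pow_dvd_iff_le_factorization (by omega)).mp (dvd_add hEn hEd)

section PrimaryComponent

variable {K p : ℕ} {χ : ℕ → ℂ}

def primaryComponent (K p : ℕ) (χ : ℕ → ℂ) : ℕ → ℂ :=
  charComponent (Nat.coprime_ordProj_ordCompl K p) χ

def coprimaryComponent (K p : ℕ) (χ : ℕ → ℂ) : ℕ → ℂ :=
  charComponent (Nat.coprime_ordProj_ordCompl K p).symm χ

theorem IsDirichletCharacterSeq.primaryComponent (hχ : IsDirichletCharacterSeq K χ) :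
    IsDirichletCharacterSeq (ordProj[p] K) (primaryComponent K p χ) :=
  hχ.charComponent _ (Nat.ordProj_mul_ordCompl_eq_self K p)

theorem IsDirichletCharacterSeq.coprimaryComponent (hχ : IsDirichletCharacterSeq K χ) :
    IsDirichletCharacterSeq (ordCompl[p] K) (coprimaryComponent K p χ) :=
  hχ.charComponent _ (by rw [mul_comm, Nat.ordProj_mul_ordCompl_eq_self K p])

theorem primaryComponent_mul_coprimaryComponent (hχ : IsDirichletCharacterSeq K χ) (z : ℕ) :
    primaryComponent K p χ z * coprimaryComponent K p χ z = χ z :=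
  charComponent_mul_charComponent _ (Nat.ordProj_mul_ordCompl_eq_self K p) hχ z

theorem primaryComponent_coprimaryComponent {q : ℕ} (hp : p.Prime) (hq : q.Prime) (hqp : q ≠ p)
    (hχ : IsDirichletCharacterSeq K χ) :
    primaryComponent (ordCompl[p] K) q (coprimaryComponent K p χ) = primaryComponent K q χ :=
  charComponent_charComponent (Nat.coprime_ordProj_ordCompl K p) (Nat.coprime_ordProj_ordCompl _ q)
    (Nat.coprime_ordProj_ordCompl K q) (Nat.ordProj_mul_ordCompl_eq_self K p)
    (Nat.ordProj_mul_ordCompl_eq_self _ q)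
    (by rw [Nat.factorization_ordCompl_of_ne hqp])
    (Nat.ordCompl_eq_ordProj_mul_ordCompl_ordCompl hp hq hqp K) hχ

theorem primaryComponent_mul_coprimaryComponent_coprimaryComponent {q : ℕ} (hp : p.Prime)
    (hq : q.Prime) (hqp : q ≠ p) (hχ : IsDirichletCharacterSeq K χ) (z : ℕ) :
    primaryComponent K p χ z *
        coprimaryComponent (ordCompl[p] K) q (coprimaryComponent K p χ) z =
      coprimaryComponent K q χ z :=
  charComponent_mul_charComponent_charComponent (Nat.coprime_ordProj_ordCompl K p)
    (Nat.coprime_ordProj_ordCompl _ q) (Nat.coprime_ordProj_ordCompl K q)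
    (Nat.ordProj_mul_ordCompl_eq_self K p)
    (Nat.ordProj_mul_ordCompl_eq_self _ q)
    (by rw [Nat.factorization_ordCompl_of_ne hqp])
    (Nat.ordCompl_eq_ordProj_mul_ordCompl_ordCompl hp hq hqp K) hχ z

end PrimaryComponent

theorem IsMultiplicativeSeq.map_ordProj_mul_ordCompl {f : ℕ → ℂ} (hf : IsMultiplicativeSeq f)
    {p n : ℕ} (hp : p.Prime) (hn : n ≠ 0) : f (ordProj[p] n) * f (ordCompl[p] n) = f n := by
  conv_rhs => rw [← Nat.ordProj_mul_ordCompl_eq_self n p]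
  exact (hf.2 _ _ (pow_pos hp.pos _) (Nat.ordCompl_pos p hn)
    ((Nat.coprime_ordCompl hp hn).pow_left _)).symm

section LocalFactor

variable {p : ℕ} {u φ : ℕ → ℂ} {β : ℂ}

/-- The local condition at `p`, for `u e = f (p ^ e)`, `φ` the `p`-primary component of the
character and `β` the value at `p` of its prime-to-`p` component. -/
def IsAdmissibleAt (p : ℕ) (u φ : ℕ → ℂ) (β : ℂ) : Prop :=
  (∃ E, ∀ e ≥ E, u e = 0) ∨ ((∃ E C, ∀ e ≥ E, u e = C * β ^ e) ∧ ∀ x, ¬p ∣ x → φ x = 1)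

noncomputable def localFactor (p : ℕ) (u φ : ℕ → ℂ) (β : ℂ) (n : ℕ) : ℂ :=
  u (n.factorization p) * φ (ordCompl[p] n) / β ^ n.factorization p

theorem IsAdmissibleAt.div_pow (h : IsAdmissibleAt p u φ β) (c : ℂ) :
    IsAdmissibleAt p (fun e => u e / c ^ e) φ (β / c) := by
  rcases h with ⟨E, hE⟩ | ⟨⟨E, C, hE⟩, hφ⟩
  · exact Or.inl ⟨E, fun e he => show u e / c ^ e = 0 by rw [hE e he, zero_div]⟩
  · refine Or.inr ⟨⟨E, C, fun e he => ?_⟩, hφ⟩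
    show u e / c ^ e = C * (β / c) ^ e
    rw [hE e he, _root_.div_pow, mul_div_assoc]

theorem IsAdmissibleAt.exists_localFactor_eq (h : IsAdmissibleAt p u φ β) (hp : p.Prime)
    (hβ : β ≠ 0) : ∃ E c, ∀ n ≠ 0, E ≤ n.factorization p → localFactor p u φ β n = c := by
  rcases h with ⟨E, hE⟩ | ⟨⟨E, C, hE⟩, hφ⟩
  · exact ⟨E, 0, fun n _ hn => by rw [localFactor, hE _ hn, zero_mul, zero_div]⟩
  · refine ⟨E, C, fun n hn0 hn => ?_⟩
    rw [localFactor, hE _ hn, hφ _ (Nat.not_dvd_ordCompl hp hn0), mul_one,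
      mul_div_cancel_right₀ _ (pow_ne_zero _ hβ)]

theorem IsAdmissibleAt.periodic_localFactor {γ : ℕ} (h : IsAdmissibleAt p u φ β) (hp : p.Prime)
    (hβ : β ≠ 0) (hφ : Function.Periodic φ (p ^ γ)) :
    ∃ d, 0 < d ∧ Function.Periodic (fun n => localFactor p u φ β (n + 1)) d := by
  obtain ⟨E, c, hc⟩ := h.exists_localFactor_eq hp hβ
  refine ⟨p ^ (E + γ), pow_pos hp.pos _, fun n => ?_⟩
  have hn : n + 1 ≠ 0 := n.succ_ne_zero
  show localFactor p u φ β (n + p ^ (E + γ) + 1) = localFactor p u φ β (n + 1)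
  rw [add_right_comm]
  set v := (n + 1).factorization p
  by_cases hv : E ≤ v
  · have hd : E ≤ (p ^ (E + γ)).factorization p := by
      rw [hp.factorization_pow, Finsupp.single_eq_same]; omega
    rw [hc _ hn hv,
      hc _ (by omega) (Nat.le_factorization_add hp hn (pow_ne_zero _ hp.ne_zero) hv hd)]
  · obtain ⟨hv', hm'⟩ := Nat.factorization_add_pow_of_lt hp hn (N := E + γ) (by omega)
    have hφ' := hφ.nat_mul (p ^ (E - v)) (ordCompl[p] (n + 1))
    rw [Nat.cast_id, ← pow_add, show E - v + γ = E + γ - v by omega] at hφ'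
    rw [localFactor, localFactor, hm', hv', hφ']

end LocalFactor

section AwayFactor

variable {p M : ℕ} {φ f : ℕ → ℂ} {β : ℂ}

noncomputable def awayFactor (p : ℕ) (φ : ℕ → ℂ) (β : ℂ) (f : ℕ → ℂ) (n : ℕ) : ℂ :=
  β ^ n.factorization p * f (ordCompl[p] n) / φ (ordCompl[p] n)

theorem localFactor_mul_awayFactor (hf : IsMultiplicativeSeq f) (hp : p.Prime) (hβ : β ≠ 0)
    {n : ℕ} (hn : n ≠ 0) (hφn : φ (ordCompl[p] n) ≠ 0) :
    localFactor p (fun e => f (p ^ e)) φ β n * awayFactor p φ β f n = f n := by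
  rw [localFactor, awayFactor, ← hf.map_ordProj_mul_ordCompl hp hn]
  field_simp

theorem IsMultiplicativeSeq.awayFactor (hf : IsMultiplicativeSeq f)
    (hφ : IsDirichletCharacterSeq M φ) :
    IsMultiplicativeSeq (awayFactor p φ β f) := by
  refine ⟨by simp [_root_.awayFactor, hf.1, hφ.map_one], fun m n hm hn hmn => ?_⟩
  have hm0 : m ≠ 0 := by omega
  have hn0 : n ≠ 0 := by omega
  have hmn' : (ordCompl[p] m).Coprime (ordCompl[p] n) :=
    (hmn.coprime_dvd_left (Nat.ordCompl_dvd m p)).coprime_dvd_right (Nat.ordCompl_dvd n p)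
  simp only [_root_.awayFactor]
  rw [Nat.ordCompl_mul, Nat.factorization_mul hm0 hn0, Finsupp.add_apply,
    hf.2 _ _ (Nat.ordCompl_pos p hm0) (Nat.ordCompl_pos p hn0) hmn', hφ.map_mul, pow_add]
  ring

theorem awayFactor_prime_pow {q : ℕ} (hq : q.Prime) (hqp : q ≠ p)
    (hφ : IsDirichletCharacterSeq M φ) (e : ℕ) :
    awayFactor p φ β f (q ^ e) = f (q ^ e) / φ q ^ e := by
  have hv : (q ^ e).factorization p = 0 := by
    rw [hq.factorization_pow, Finsupp.single_eq_of_ne hqp.symm]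
  rw [awayFactor, hv, pow_zero, pow_zero, Nat.div_one, one_mul, hφ.map_pow]

end AwayFactor

section Periodicity

variable {K p : ℕ} {f χ : ℕ → ℂ}

theorem awayFactor_eq_coprimaryComponent (hp : p.Prime) (hχ : IsDirichletCharacterSeq K χ)
    (hfχ : ∀ n, 1 ≤ n → n.Coprime K → f n = χ n) {n : ℕ}
    (hn : 1 ≤ n) (hnR : n.Coprime (ordCompl[p] K)) :
    awayFactor p (primaryComponent K p χ) (coprimaryComponent K p χ p) f n =
      coprimaryComponent K p χ n := by
  have hn0 : n ≠ 0 := by omega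
  set m := ordCompl[p] n
  have hmA : m.Coprime (ordProj[p] K) :=
    Nat.Coprime.pow_right _ (hp.coprime_iff_not_dvd.mpr (Nat.not_dvd_ordCompl hp hn0)).symm
  have hmR : m.Coprime (ordCompl[p] K) := hnR.coprime_dvd_left (Nat.ordCompl_dvd n p)
  have hmK : m.Coprime K := by
    rw [← Nat.ordProj_mul_ordCompl_eq_self K p]; exact hmA.mul_right hmR
  have hφm : primaryComponent K p χ m ≠ 0 := hχ.primaryComponent.ne_zero hmA
  rw [awayFactor, hfχ m (Nat.ordCompl_pos p hn0) hmK,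
    ← primaryComponent_mul_coprimaryComponent hχ, mul_div_assoc, mul_div_cancel_left₀ _ hφm,
    ← hχ.coprimaryComponent.map_pow, ← hχ.coprimaryComponent.map_mul,
    Nat.ordProj_mul_ordCompl_eq_self]

theorem IsAdmissibleAt.awayFactor {q : ℕ} (hp : p.Prime) (hq : q.Prime) (hqp : q ≠ p)
    (hχ : IsDirichletCharacterSeq K χ)
    (h : IsAdmissibleAt q (fun e => f (q ^ e)) (primaryComponent K q χ)
      (coprimaryComponent K q χ q)) :
    IsAdmissibleAt q
      (fun e => awayFactor p (primaryComponent K p χ) (coprimaryComponent K p χ p) f (q ^ e))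
      (primaryComponent (ordCompl[p] K) q (coprimaryComponent K p χ))
      (coprimaryComponent (ordCompl[p] K) q (coprimaryComponent K p χ) q) := by
  have hφq : primaryComponent K p χ q ≠ 0 :=
    hχ.primaryComponent.ne_zero (((Nat.coprime_primes hq hp).mpr hqp).pow_right _)
  have hβ : coprimaryComponent (ordCompl[p] K) q (coprimaryComponent K p χ) q =
      coprimaryComponent K q χ q / primaryComponent K p χ q := by
    rw [eq_div_iff hφq, mul_comm]
    exact primaryComponent_mul_coprimaryComponent_coprimaryComponent hp hq hqp hχ q
  rw [primaryComponent_coprimaryComponent hp hq hqp hχ, hβ]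
  simpa only [awayFactor_prime_pow hq hqp hχ.primaryComponent] using h.div_pow _

end Periodicity

theorem exists_periodic_of_isAdmissibleAt {K : ℕ} (hK : 0 < K) {f χ : ℕ → ℂ}
    (hf : IsMultiplicativeSeq f) (hχ : IsDirichletCharacterSeq K χ)
    (hfχ : ∀ n, 1 ≤ n → n.Coprime K → f n = χ n)
    (hadm : ∀ p, p.Prime → p ∣ K →
      IsAdmissibleAt p (fun e => f (p ^ e)) (primaryComponent K p χ) (coprimaryComponent K p χ p)) :
    ∃ d, 0 < d ∧ Function.Periodic (fun n => f (n + 1)) d := by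
  induction K using Nat.strong_induction_on generalizing f χ with
  | _ K IH =>
  rcases eq_or_ne K 1 with rfl | hK1
  · refine ⟨1, one_pos, fun n => ?_⟩
    simp only [hfχ _ (Nat.le_add_left 1 _) (Nat.coprime_one_right _)]
    exact hχ.eq_of_modEq Nat.modEq_one
  set p := K.minFac
  have hp : p.Prime := Nat.minFac_prime hK1
  have hφ := hχ.primaryComponent (p := p)
  have hψ := hχ.coprimaryComponent (p := p)
  have hβ : coprimaryComponent K p χ p ≠ 0 := hψ.ne_zero (Nat.coprime_ordCompl hp hK.ne')
  have hR : ordCompl[p] K < K := Nat.div_lt_self hK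
    (Nat.one_lt_pow (hp.factorization_pos_of_dvd hK.ne' (Nat.minFac_dvd K)).ne' hp.one_lt)
  obtain ⟨d₁, hd₁, hper₁⟩ := IH _ hR (Nat.ordCompl_pos p hK.ne') (hf.awayFactor hφ) hψ
    (fun n hn hnR => awayFactor_eq_coprimaryComponent hp hχ hfχ hn hnR)
    (fun q hq hqR => (hadm q hq (hqR.trans (Nat.ordCompl_dvd K p))).awayFactor hp hq
      (fun h => Nat.not_dvd_ordCompl hp hK.ne' (h ▸ hqR)) hχ)
  obtain ⟨d₂, hd₂, hper₂⟩ := (hadm p hp (Nat.minFac_dvd K)).periodic_localFactor hp hβ hφ.periodic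
  have hsplit : (fun n => f (n + 1)) = (fun n => localFactor p (fun e => f (p ^ e))
      (primaryComponent K p χ) (coprimaryComponent K p χ p) (n + 1)) *
      (fun n => awayFactor p (primaryComponent K p χ) (coprimaryComponent K p χ p) f (n + 1)) :=
    funext fun n => (localFactor_mul_awayFactor hf hp hβ n.succ_ne_zero
      (hφ.ne_zero ((Nat.coprime_ordCompl hp n.succ_ne_zero).symm.pow_right _))).symm
  refine ⟨d₂ * d₁, mul_pos hd₂ hd₁, hsplit ▸ ?_⟩
  have hper₂' := hper₂.nat_mul d₁
  rw [Nat.cast_id, mul_comm] at hper₂'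
  exact hper₂'.mul (hper₁.nat_mul d₂)

theorem IsAutomatic.exists_forall_eq {lam : ℕ} {f : ℕ → ℂ} (haut : IsAutomatic lam f)
    {r : ℕ → ℕ} (hr : ∀ k, 1 ≤ k → r k < lam ^ k) :
    ∃ k t, 1 ≤ k ∧ 1 ≤ t ∧ ∀ n, f (lam ^ k * n + r k) = f (lam ^ (k + t) * n + r (k + t)) := by
  have hmaps : Set.MapsTo (fun k n => f (lam ^ k * n + r k)) (Set.Ici 1)
      {g | ∃ k r, r < lam ^ k ∧ g = fun n => f (lam ^ k * n + r)} :=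
    fun k hk => ⟨k, r k, hr k hk, rfl⟩
  obtain ⟨k₁, hk₁, k₂, hk₂, hne, heq⟩ := (Set.Ici_infinite 1).exists_ne_map_eq_of_mapsTo hmaps haut
  rcases lt_or_gt_of_ne hne with h | h
  · exact ⟨k₁, k₂ - k₁, hk₁, by omega, by rw [Nat.add_sub_cancel' h.le]; exact congrFun heq⟩
  · exact ⟨k₂, k₁ - k₂, hk₂, by omega, by rw [Nat.add_sub_cancel' h.le]; exact congrFun heq.symm⟩

theorem exists_mul_add_one_eq_pow_mul {p c x : ℕ} (hp : p.Prime) (hc : c.Coprime p)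
    (hx : ¬p ∣ x) (j γ : ℕ) : ∃ n m, c * n + 1 = p ^ j * m ∧ m ≡ x [MOD p ^ γ] := by
  have hpos : 1 ≤ p ^ j * x :=
    Nat.mul_pos (pow_pos hp.pos j) (Nat.pos_of_ne_zero fun h => hx (h ▸ dvd_zero p))
  obtain ⟨n, -, hn⟩ := Nat.exists_mul_mod_eq_of_coprime (p ^ j * x - 1) (hc.pow_right (j + γ))
    (pow_ne_zero _ hp.ne_zero)
  have hM : c * n + 1 ≡ p ^ j * x [MOD p ^ j * p ^ γ] := by
    simpa [← pow_add, Nat.sub_add_cancel hpos] using Nat.ModEq.add_right 1 hn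
  obtain ⟨m, hm⟩ : p ^ j ∣ c * n + 1 := Nat.modEq_zero_iff_dvd.mp
    ((hM.of_dvd (dvd_mul_right _ _)).trans (Nat.modEq_zero_iff_dvd.mpr (dvd_mul_right _ _)))
  exact ⟨n, m, hm, Nat.ModEq.mul_left_cancel' (pow_ne_zero j hp.ne_zero) (hm ▸ hM)⟩

theorem exists_mul_add_one_eq_pow_mul_of_add_one_eq {p T U δ γ j N m : ℕ} (hp : 0 < p)
    (hTU : p ^ δ * U = T - 1) (hT : 1 ≤ T) (hj : δ + γ ≤ j) (hN : N + 1 = p ^ j * m) :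
    ∃ m', T * N + 1 = p ^ δ * m' ∧ m' + U ≡ 0 [MOD p ^ γ] := by
  have hsum : T * N + 1 + p ^ δ * U = p ^ δ * (T * p ^ (j - δ) * m) := by
    calc T * N + 1 + p ^ δ * U = T * (N + 1) := by rw [hTU, mul_add, mul_one]; omega
      _ = p ^ δ * (T * p ^ (j - δ) * m) := by
        rw [hN, ← Nat.add_sub_cancel' (le_of_add_le_left hj), pow_add, Nat.add_sub_cancel_left]
        ring
  obtain ⟨m', hm'⟩ : p ^ δ ∣ T * N + 1 :=
    (Nat.dvd_add_left (dvd_mul_right _ U)).mp (hsum ▸ dvd_mul_right _ _)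
  refine ⟨m', hm', Nat.modEq_zero_iff_dvd.mpr ?_⟩
  have hm'U : m' + U = T * p ^ (j - δ) * m :=
    Nat.eq_of_mul_eq_mul_left (pow_pos hp δ) (by rw [mul_add, ← hm', hsum])
  rw [hm'U]
  exact ((pow_dvd_pow p (by omega)).mul_left T).mul_right m

theorem isAdmissibleAt_of_forall_mul_eq {p s J : ℕ} {u φ : ℕ → ℂ} {β W : ℂ} (hp : p.Prime)
    (hβ : β ≠ 0) (hφ : φ 1 = 1) (h : ∀ j ≥ J, ∀ x, ¬p ∣ x → u (s + j) * φ x = W * β ^ j) :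
    IsAdmissibleAt p u φ β := by
  have hgeo : ∀ e ≥ s + J, u e = W * β ^ (e - s) := fun e he => by
    simpa [hφ, Nat.add_sub_cancel' (le_of_add_le_left he)] using
      h (e - s) (by omega) 1 hp.not_dvd_one
  rcases eq_or_ne W 0 with rfl | hW
  · exact Or.inl ⟨s + J, fun e he => by rw [hgeo e he, zero_mul]⟩
  refine Or.inr ⟨⟨s + J, W / β ^ s, fun e he => ?_⟩, fun x hx => ?_⟩
  · rw [hgeo e he, ← Nat.add_sub_cancel' (le_of_add_le_left he), pow_add, Nat.add_sub_cancel_left]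
    field_simp
  · have hu : u (s + J) ≠ 0 := by
      rw [hgeo _ le_rfl, Nat.add_sub_cancel_left]; exact mul_ne_zero hW (pow_ne_zero _ hβ)
    refine mul_left_cancel₀ hu ?_
    rw [h J le_rfl x hx, mul_one, hgeo _ le_rfl, Nat.add_sub_cancel_left]

section Automatic

variable {K p : ℕ} {a χ : ℕ → ℂ}

theorem apply_pow_mul_mul_coprimaryComponent_pow (hp : p.Prime) (hχ : IsDirichletCharacterSeq K χ)
    (ha : IsMultiplicativeSeq a) (haχ : ∀ n, 1 ≤ n → n.Coprime K → a n = χ n) {s v m : ℕ}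
    (hm : ¬p ∣ m) (hR : p ^ v * m ≡ 1 [MOD ordCompl[p] K]) :
    a (p ^ s * (p ^ v * m)) * coprimaryComponent K p χ p ^ v =
      a (p ^ (s + v)) * primaryComponent K p χ m := by
  have hψ := hχ.coprimaryComponent (p := p)
  have hm0 : 0 < m := Nat.pos_of_ne_zero fun h => hm (h ▸ dvd_zero p)
  have hmp : m.Coprime p := (hp.coprime_iff_not_dvd.mpr hm).symm
  have hmK : m.Coprime K := by
    rw [← Nat.ordProj_mul_ordCompl_eq_self K p]
    exact (hmp.pow_right _).mul_right (Nat.coprime_of_mul_modEq_one _ (by rwa [mul_comm]))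
  rw [← mul_assoc, ← pow_add, ha.2 _ _ (pow_pos hp.pos _) hm0 (hmp.symm.pow_left _),
    haχ m hm0 hmK, ← primaryComponent_mul_coprimaryComponent hχ, ← hψ.map_pow, mul_assoc,
    mul_assoc, ← hψ.map_mul, mul_comm m, hψ.eq_of_modEq hR, hψ.map_one, mul_one]

theorem exists_forall_apply_pow_mul_primaryComponent (hp : p.Prime) (hK : K ≠ 0) (hpK : p ∣ K)
    (hχ : IsDirichletCharacterSeq K χ) (ha : IsMultiplicativeSeq a)
    (haχ : ∀ n, 1 ≤ n → n.Coprime K → a n = χ n) {c T s s' : ℕ} (hc : c.Coprime p)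
    (hRc : ordCompl[p] K ∣ c) (hT : 2 ≤ T)
    (hker : ∀ n, a (p ^ s * (c * n + 1)) = a (p ^ s' * (T * (c * n) + 1))) :
    ∃ J W, ∀ j ≥ J, ∀ x, ¬p ∣ x →
      a (p ^ (s + j)) * primaryComponent K p χ x = W * coprimaryComponent K p χ p ^ j := by
  set γ := K.factorization p
  have hγ : γ ≠ 0 := (hp.factorization_pos_of_dvd hK hpK).ne'
  have hφ := hχ.primaryComponent (p := p)
  have hβ : coprimaryComponent K p χ p ≠ 0 :=
    hχ.coprimaryComponent.ne_zero (Nat.coprime_ordCompl hp hK)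
  set δ := (T - 1).factorization p
  set U := ordCompl[p] (T - 1)
  have hpU : ¬p ∣ U := Nat.not_dvd_ordCompl hp (by omega)
  have hζ : U * (p ^ γ - 1) + U ≡ 0 [MOD p ^ γ] := Nat.modEq_zero_iff_dvd.mpr
    ⟨U, by rw [Nat.mul_sub_one, Nat.sub_add_cancel (Nat.le_mul_of_pos_right U (pow_pos hp.pos γ)),
      mul_comm]⟩
  have hR : ∀ N, c ∣ N → N + 1 ≡ 1 [MOD ordCompl[p] K] := fun N hN => by
    simpa using (Nat.modEq_zero_iff_dvd.mpr (hRc.trans hN)).add_right 1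
  refine ⟨δ + γ, a (p ^ (s' + δ)) * primaryComponent K p χ (U * (p ^ γ - 1)) /
    coprimaryComponent K p χ p ^ δ, fun j hj x hx => ?_⟩
  -- Take `n` with `c * n + 1 = p ^ j * m`, `m ≡ x`. Then `T * (c * n) + 1 = p ^ δ * m'` with
  -- `m' ≡ -U [MOD p ^ γ]`, which depends neither on `j` nor on `x`.
  obtain ⟨n, m, hM, hmx⟩ := exists_mul_add_one_eq_pow_mul hp hc hx j γ
  obtain ⟨m', hM', hm'U⟩ := exists_mul_add_one_eq_pow_mul_of_add_one_eq hp.pos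
    (Nat.ordProj_mul_ordCompl_eq_self (T - 1) p) (by omega) hj hM
  have hm : ¬p ∣ m := by
    rwa [(hmx.of_dvd (dvd_pow_self p hγ)).dvd_iff dvd_rfl]
  have hm' : ¬p ∣ m' := fun h => hpU <| (Nat.dvd_add_right h).mp <|
    Nat.modEq_zero_iff_dvd.mp (hm'U.of_dvd (dvd_pow_self p hγ))
  have e₁ := apply_pow_mul_mul_coprimaryComponent_pow (s := s) hp hχ ha haχ hm
    (hM ▸ hR _ (dvd_mul_right c n))
  have e₂ := apply_pow_mul_mul_coprimaryComponent_pow (s := s') hp hχ ha haχ hm'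
    (hM' ▸ hR _ ((dvd_mul_right c n).mul_left T))
  rw [hφ.eq_of_modEq (Nat.ModEq.add_right_cancel' U (hm'U.trans hζ.symm))] at e₂
  rw [← hφ.eq_of_modEq hmx, ← e₁, ← hM, hker, hM', ← e₂, mul_div_cancel_right₀ _ (pow_ne_zero _ hβ)]

end Automatic

theorem isAdmissibleAt_of_isAutomatic {lam h p : ℕ} (hlam : 2 ≤ lam) (hh : 1 ≤ h)
    (hnotpp : ¬∃ p k : ℕ, p.Prime ∧ lam = p ^ k) {a χ : ℕ → ℂ}
    (haut : IsAutomatic lam a) (ha : IsMultiplicativeSeq a)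
    (hχ : IsDirichletCharacterSeq (h * lam) χ)
    (haχ : ∀ n, 1 ≤ n → n.Coprime (h * lam) → a n = χ n) (hp : p.Prime) (hpK : p ∣ h * lam) :
    IsAdmissibleAt p (fun e => a (p ^ e)) (primaryComponent (h * lam) p χ)
      (coprimaryComponent (h * lam) p χ p) := by
  set α := lam.factorization p
  set Q := ordCompl[p] lam
  set H := ordCompl[p] h
  have hPQ : p ^ α * Q = lam := Nat.ordProj_mul_ordCompl_eq_self lam p
  have hQ : 2 ≤ Q := by
    by_contra hQ
    have hQ1 : Q = 1 := by have := Nat.ordCompl_pos p (n := lam) (by omega); omega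
    exact hnotpp ⟨p, α, hp, by rw [← hPQ, hQ1, mul_one]⟩
  have hQp : Q.Coprime p := (Nat.coprime_ordCompl hp (by omega)).symm
  obtain ⟨k, t, hk, ht, hker⟩ := haut.exists_forall_eq (r := fun k => (p ^ α) ^ k) fun k hk =>
    Nat.pow_lt_pow_left (hPQ ▸ lt_mul_of_one_lt_right (pow_pos hp.pos α) (by omega)) (by omega)
  have hpow : ∀ k n, lam ^ k * (H * n) + (p ^ α) ^ k = p ^ (α * k) * (Q ^ k * H * n + 1) :=
    fun k n => by rw [← hPQ, pow_mul]; ring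
  obtain ⟨J, W, hJ⟩ := exists_forall_apply_pow_mul_primaryComponent hp (by positivity) hpK hχ ha
    haχ (c := Q ^ k * H) (T := Q ^ t) (s := α * k) (s' := α * (k + t))
    ((hQp.pow_left k).mul_left (Nat.coprime_ordCompl hp (by omega)).symm)
    (by rw [Nat.ordCompl_mul, mul_comm]; exact mul_dvd_mul_right (dvd_pow_self Q (by omega)) _)
    (hQ.trans (Nat.le_self_pow (by omega) Q))
    (fun n => by rw [← hpow, hker, hpow]; ring_nf)
  exact isAdmissibleAt_of_forall_mul_eq hp
    (hχ.coprimaryComponent.ne_zero (Nat.coprime_ordCompl hp (by positivity)))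
    hχ.primaryComponent.map_one hJ

theorem stmt_15_general (lam h : ℕ) (hlam : 2 ≤ lam) (hh : 1 ≤ h)
    (hnotpp : ¬ ∃ (p k : ℕ), p.Prime ∧ lam = p ^ k)
    (a : ℕ → ℂ) (haut : IsAutomatic lam a) (ha : IsMultiplicativeSeq a)
    (χ : ℕ → ℂ) (hχ : IsDirichletCharacterSeq (h * lam) χ)
    (haχ : ∀ n : ℕ, 1 ≤ n → Nat.Coprime n (h * lam) → a n = χ n) :
    ∃ d : ℕ, 1 ≤ d ∧ ∀ n : ℕ, 1 ≤ n → a (n + d) = a n := by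
  obtain ⟨d, hd, hper⟩ := exists_periodic_of_isAdmissibleAt (by positivity) ha hχ haχ
    fun p hp hpK => isAdmissibleAt_of_isAutomatic hlam hh hnotpp haut ha hχ haχ hp hpK
  refine ⟨d, hd, fun n hn => ?_⟩
  obtain ⟨m, rfl⟩ := Nat.exists_eq_add_of_le' hn
  simpa only [add_right_comm m d 1] using hper m

theorem stmt_15 (lam h : ℕ) (hlam : 2 ≤ lam) (hh : 1 ≤ h)
    (hcop : Nat.Coprime h lam)
    (hnotpp : ¬ ∃ (p k : ℕ), p.Prime ∧ lam = p ^ k)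
    (a : ℕ → ℂ) (haut : IsAutomatic lam a) (ha : IsMultiplicativeSeq a)
    (χ : ℕ → ℂ) (hχ : IsDirichletCharacterSeq (h * lam) χ)
    (haχ : ∀ n : ℕ, 1 ≤ n → Nat.Coprime n (h * lam) → a n = χ n) :
    ∃ d : ℕ, 1 ≤ d ∧ ∀ n : ℕ, 1 ≤ n → a (n + d) = a n :=
  stmt_15_general lam h hlam hh hnotpp a haut ha χ hχ haχ
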